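/- arXiv:1903.07707 — 8 statements merged into one kernel-verified Lean document; each statement's English description precedes it below -/
import Mathlib

section
/- The optimal value of the original mixed-autonomy optimization problem (4) is an upper bound on the optimal equilibrium profits of the platform: for any prices p_i ≥ 0 and compensations c_i ≥ 0 and any equilibrium (δ, x, y, z, r) under (p, c), the equilibrium profit ∑_i (min(x_i + z_i, d_i)·p_i − min(x_i, d_i)·c_i − s·z_i) is at most the supremum of the objective J over the feasible set of problem (4). -/
open Finset

/-- Effective demand at location `i` given prices `p`. -/
noncomputable def demand {n : ℕ} (θ : Fin n → ℝ) (F : ℝ → ℝ) (p : Fin n → ℝ) (i : Fin n) : ℝ :=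
  θ i * (1 - F (p i))

/-- The platform's objective `J`. -/
noncomputable def objective {n : ℕ} (θ : Fin n → ℝ) (F : ℝ → ℝ) (ω s : ℝ)
    (p δ z : Fin n → ℝ) : ℝ :=
  (∑ i, p i * (θ i * (1 - F (p i)))) - ω * (∑ i, δ i) - s * (∑ i, z i)

/-- Feasibility for the original problem (4). -/
noncomputable def FeasOrig {n : ℕ} (α : Fin n → Fin n → ℝ) (θ : Fin n → ℝ) (F : ℝ → ℝ) (β : ℝ)
    (p δ x z : Fin n → ℝ) (y r : Fin n → Fin n → ℝ) : Prop :=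
  (∀ i, 0 ≤ p i) ∧ (∀ i, 0 ≤ δ i) ∧ (∀ i, 0 ≤ x i) ∧ (∀ i, 0 ≤ z i) ∧
  (∀ i j, 0 ≤ y i j) ∧ (∀ i j, 0 ≤ r i j) ∧
  (∀ i, x i = β * ((∑ j, α j i * min (x j) (demand θ F p j)) + ∑ j, y j i) + δ i) ∧
  (∀ i, (∑ j, y i j) = max (x i - demand θ F p i) 0) ∧
  (∀ i, z i = (∑ j, α j i * max (demand θ F p j - x j) 0) + ∑ j, r j i) ∧
  (∀ i, (∑ j, r i j) = z i - max (demand θ F p i - x i) 0)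

/-- `(δ, x, y, z, r)` is an equilibrium under prices `p` and compensations `c`. -/
noncomputable def IsEquilibrium {n : ℕ} (α : Fin n → Fin n → ℝ) (θ : Fin n → ℝ) (F : ℝ → ℝ)
    (β ω : ℝ) (p c δ x z : Fin n → ℝ) (y r : Fin n → Fin n → ℝ) : Prop :=
  (∀ i, 0 ≤ δ i) ∧ (∀ i, 0 ≤ x i) ∧ (∀ i, 0 ≤ z i) ∧
  (∀ i j, 0 ≤ y i j) ∧ (∀ i j, 0 ≤ r i j) ∧
  (∀ i, (∑ k, y i k) = max (x i - demand θ F p i) 0) ∧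
  (∀ i, x i = β * ((∑ j, α j i * min (x j) (demand θ F p j)) + ∑ j, y j i) + δ i) ∧
  (∀ i, z i = (∑ j, α j i * min (z j) (max (demand θ F p j - x j) 0)) + ∑ j, r j i) ∧
  (∀ i, (∑ k, r i k) = max (z i - max (demand θ F p i - x i) 0) 0) ∧
  (∀ i, min (demand θ F p i) (x i) * c i = (1 - β) * ω * x i)

/-- `min a b + max (a - b) 0 = a`. -/
lemma aux_min_add_max (a b : ℝ) : min a b + max (a - b) 0 = a := by
  rcases le_total a b with h | h
  · rw [min_eq_left h, max_eq_right (sub_nonpos.mpr h), add_zero]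
  · rw [min_eq_right h, max_eq_left (sub_nonneg.mpr h)]; ring

lemma aux_sub_min (a b : ℝ) : a - min a b = max (a - b) 0 := by
  have := aux_min_add_max a b; linarith

/-- Any equilibrium profit is at most the optimal value of problem (4). -/
theorem equilibrium_profit_le_sSup_orig {n : ℕ} (α : Fin n → Fin n → ℝ) (θ : Fin n → ℝ) (F : ℝ → ℝ) (β ω s pbar : ℝ)
    (hαnn : ∀ i j, 0 ≤ α i j) (hαd : ∀ i, α i i = 0) (hαr : ∀ i, (∑ j, α i j) = 1)
    (hθ : ∀ i, 0 < θ i) (hβ0 : 0 < β) (hβ1 : β < 1) (hω : 0 < ω) (hs : 0 < s)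
    (hFc : Continuous F) (hFm : Monotone F) (hF0 : F 0 = 0) (hFp : F pbar = 1)
    (p c δ x z : Fin n → ℝ) (y r : Fin n → Fin n → ℝ)
    (hp : ∀ i, 0 ≤ p i) (hc : ∀ i, 0 ≤ c i)
    (heq : IsEquilibrium α θ F β ω p c δ x z y r) :
    (∑ i, (min (x i + z i) (demand θ F p i) * p i
        - min (x i) (demand θ F p i) * c i - s * z i))
      ≤ sSup {v : ℝ | ∃ (p δ x z : Fin n → ℝ) (y r : Fin n → Fin n → ℝ),
        FeasOrig α θ F β p δ x z y r ∧ v = objective θ F ω s p δ z} := by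
  classical
  obtain ⟨hδ, hx, hz, hy, hr, hy_row, hx_eq, hz_eq, hr_row, hdrv⟩ := heq
  have hpbar : 0 < pbar := by
    by_contra h
    push_neg at h
    have := hFm h
    rw [hF0] at this
    rw [hFp] at this
    linarith
  -- the served demand
  set q : Fin n → ℝ := fun i => min (x i + z i) (demand θ F p i) with hqdef
  have hqi : ∀ i, q i = min (x i + z i) (demand θ F p i) := fun i => rfl
  have hq_le_d : ∀ i, q i ≤ demand θ F p i := fun i => min_le_right _ _
  -- new prices achieving demand q
  have hchoice : ∀ i, ∃ t : ℝ, p i ≤ t ∧ θ i * (1 - F t) = q i ∧ (t = p i ∨ 0 ≤ q i) := by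
    intro i
    rcases le_total (demand θ F p i) (x i + z i) with h | h
    · refine ⟨p i, le_rfl, ?_, Or.inl rfl⟩
      rw [hqi, min_eq_right h]; rfl
    · -- q i = x i + z i
      have hq0 : 0 ≤ x i + z i := add_nonneg (hx i) (hz i)
      have hqv : q i = x i + z i := by rw [hqi, min_eq_left h]
      have hd : demand θ F p i = θ i * (1 - F (p i)) := rfl
      have hθi := hθ i
      have hτ1 : F (p i) ≤ 1 - (x i + z i) / θ i := by
        have h' : (x i + z i) / θ i ≤ 1 - F (p i) := by
          rw [div_le_iff₀ hθi]
          have hcomm : (1 - F (p i)) * θ i = θ i * (1 - F (p i)) := mul_comm _ _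
          have h'' : x i + z i ≤ θ i * (1 - F (p i)) := h
          linarith
        linarith
      have hτ2 : 1 - (x i + z i) / θ i ≤ 1 := by
        have : 0 ≤ (x i + z i) / θ i := div_nonneg hq0 hθi.le
        linarith
      rcases le_total (p i) pbar with hpp | hpp
      · have hiv := intermediate_value_Icc hpp hFc.continuousOn
        have hmem : (1 - (x i + z i) / θ i) ∈ Set.Icc (F (p i)) (F pbar) := by
          rw [hFp]; exact ⟨hτ1, hτ2⟩
        obtain ⟨t, ht, hFt⟩ := hiv hmem
        refine ⟨t, ht.1, ?_, Or.inr (hqv ▸ hq0)⟩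
        rw [hFt, hqv]
        field_simp
        ring
      · -- pbar ≤ p i : then F (p i) = 1 and (x i + z i)/θ i = 0
        have h1 : (1:ℝ) ≤ F (p i) := hFp ▸ hFm hpp
        refine ⟨p i, le_rfl, ?_, Or.inl rfl⟩
        have h2 : (x i + z i) / θ i = 0 := by
          have : 0 ≤ (x i + z i) / θ i := div_nonneg hq0 hθi.le
          linarith
        have h3 : x i + z i = 0 := by
          rcases div_eq_zero_iff.mp h2 with h3 | h3
          · exact h3
          · exact absurd h3 (ne_of_gt hθi)
        have h4 : F (p i) = 1 := le_antisymm (by linarith) h1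
        rw [hqv, h3, h4]; ring
  choose p' hp'le hp'q hp'or using hchoice
  have hp'nn : ∀ i, 0 ≤ p' i := fun i => (hp i).trans (hp'le i)
  have hdq : ∀ i, demand θ F p' i = q i := fun i => hp'q i
  -- key identity: residual demand under p' equals min (z j) (residual under p)
  have hmax_q : ∀ i, max (q i - x i) 0 = min (z i) (max (demand θ F p i - x i) 0) := by
    intro i
    rcases le_total (demand θ F p i) (x i + z i) with h | h
    · rw [hqi, min_eq_right h]
      exact (min_eq_right (max_le (by linarith) (hz i))).symm
    · rw [hqi, min_eq_left h]
      have h1 : x i + z i - x i = z i := by ring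
      rw [h1, max_eq_left (hz i)]
      exact (min_eq_left (le_max_of_le_left (by linarith))).symm
  -- sums
  have hsum_swap : ∀ (g : Fin n → ℝ), (∑ i, ∑ j, α j i * g j) = ∑ j, g j := by
    intro g
    rw [Finset.sum_comm]
    refine Finset.sum_congr rfl fun j _ => ?_
    rw [← Finset.sum_mul, hαr j, one_mul]
  have hA : ∀ i, x i = β * ((∑ j, α j i * min (x j) (demand θ F p j)) + ∑ j, y j i) + δ i :=
    hx_eq
  have hAsum : (∑ i, ((∑ j, α j i * min (x j) (demand θ F p j)) + ∑ j, y j i)) = ∑ i, x i := by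
    have h2 : (∑ i, ∑ j, y j i) = ∑ j, max (x j - demand θ F p j) 0 := by
      rw [Finset.sum_comm]
      exact Finset.sum_congr rfl fun j _ => hy_row j
    rw [Finset.sum_add_distrib, hsum_swap, h2, ← Finset.sum_add_distrib]
    exact Finset.sum_congr rfl fun j _ => aux_min_add_max _ _
  have hδsum : (∑ i, δ i) = (1 - β) * ∑ i, x i := by
    have h1 : (∑ i, x i) = β * (∑ i, ((∑ j, α j i * min (x j) (demand θ F p j)) + ∑ j, y j i)) + ∑ i, δ i := by
      rw [Finset.mul_sum, ← Finset.sum_add_distrib]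
      exact Finset.sum_congr rfl fun i _ => hA i
    rw [hAsum] at h1
    linarith
  -- the rebalancing flows y'
  set a : Fin n → ℝ := fun i =>
    ((∑ j, α j i * min (x j) (demand θ F p j)) + ∑ j, y j i) - ∑ j, α j i * min (x j) (q j)
    with hadef
  have ha_nn : ∀ i, 0 ≤ a i := by
    intro i
    have h1 : (∑ j, α j i * min (x j) (q j)) ≤ ∑ j, α j i * min (x j) (demand θ F p j) :=
      Finset.sum_le_sum fun j _ =>
        mul_le_mul_of_nonneg_left (min_le_min le_rfl (hq_le_d j)) (hαnn j i)
    have h2 : 0 ≤ ∑ j, y j i := Finset.sum_nonneg fun j _ => hy j i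
    simp only [hadef]
    linarith
  set Y : Fin n → ℝ := fun i => max (x i - q i) 0 with hYdef
  have hY_nn : ∀ i, 0 ≤ Y i := fun i => le_max_right _ _
  have haY : (∑ i, a i) = ∑ i, Y i := by
    simp only [hadef, hYdef]
    rw [Finset.sum_sub_distrib, hAsum, hsum_swap, ← Finset.sum_sub_distrib]
    exact Finset.sum_congr rfl fun i _ => aux_sub_min _ _
  set Sa : ℝ := ∑ i, a i with hSadef
  have hSa_nn : 0 ≤ Sa := Finset.sum_nonneg fun i _ => ha_nn i
  set y' : Fin n → Fin n → ℝ := fun i j => if Sa = 0 then 0 else Y i * a j / Sa with hy'def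
  have hy'_nn : ∀ i j, 0 ≤ y' i j := by
    intro i j
    simp only [hy'def]
    split
    · exact le_rfl
    · exact div_nonneg (mul_nonneg (hY_nn i) (ha_nn j)) hSa_nn
  have hy'_rowsum : ∀ i, (∑ j, y' i j) = Y i := by
    intro i
    by_cases hS : Sa = 0
    · have hYz : ∀ k, Y k = 0 := by
        have h0 : (∑ k, Y k) = 0 := by rw [← haY]; exact hS
        intro k
        exact (Finset.sum_eq_zero_iff_of_nonneg (fun k _ => hY_nn k)).mp h0 k (Finset.mem_univ k)
      simp only [hy'def, if_pos hS]
      rw [Finset.sum_const, smul_zero, hYz i]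
    · simp only [hy'def, if_neg hS]
      rw [← Finset.sum_div, ← Finset.mul_sum, ← hSadef, mul_div_assoc, div_self hS, mul_one]
  have hy'_colsum : ∀ j, (∑ i, y' i j) = a j := by
    intro j
    by_cases hS : Sa = 0
    · have haz : a j = 0 :=
        (Finset.sum_eq_zero_iff_of_nonneg (fun k _ => ha_nn k)).mp (hSadef ▸ hS) j
          (Finset.mem_univ j)
      simp only [hy'def, if_pos hS]
      rw [Finset.sum_const, smul_zero, haz]
    · simp only [hy'def, if_neg hS]
      rw [← Finset.sum_div, ← Finset.sum_mul, ← haY, mul_comm, mul_div_assoc,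
        div_self hS, mul_one]
  -- feasibility of (p', δ, x, z, y', r)
  have hfeas : FeasOrig α θ F β p' δ x z y' r := by
    refine ⟨hp'nn, hδ, hx, hz, hy'_nn, hr, ?_, ?_, ?_, ?_⟩
    · intro i
      have : (∑ j, α j i * min (x j) (demand θ F p' j)) = ∑ j, α j i * min (x j) (q j) :=
        Finset.sum_congr rfl fun j _ => by rw [hdq j]
      rw [this, hy'_colsum i]
      simp only [hadef]
      rw [hx_eq i]
      ring
    · intro i
      rw [hy'_rowsum i, hYdef]
      simp only [hdq i]
    · intro i
      have : (∑ j, α j i * max (demand θ F p' j - x j) 0)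
          = ∑ j, α j i * min (z j) (max (demand θ F p j - x j) 0) :=
        Finset.sum_congr rfl fun j _ => by rw [hdq j, hmax_q j]
      rw [this]
      exact hz_eq i
    · intro i
      rw [hr_row i, hdq i, hmax_q i]
      have := aux_sub_min (z i) (max (demand θ F p i - x i) 0)
      linarith
  -- the objective value of this feasible point
  set v : ℝ := objective θ F ω s p' δ z with hvdef
  have hvmem : v ∈ {v : ℝ | ∃ (p δ x z : Fin n → ℝ) (y r : Fin n → Fin n → ℝ),
      FeasOrig α θ F β p δ x z y r ∧ v = objective θ F ω s p δ z} :=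
    ⟨p', δ, x, z, y', r, hfeas, rfl⟩
  -- the set is bounded above
  have hbdd : BddAbove {v : ℝ | ∃ (p δ x z : Fin n → ℝ) (y r : Fin n → Fin n → ℝ),
      FeasOrig α θ F β p δ x z y r ∧ v = objective θ F ω s p δ z} := by
    refine ⟨∑ i : Fin n, pbar * θ i, ?_⟩
    rintro w ⟨P, D, X, Z, Yv, R, ⟨hP, hD, hX, hZ, _, _, _, _, _, _⟩, rfl⟩
    have h1 : objective θ F ω s P D Z ≤ ∑ i, P i * (θ i * (1 - F (P i))) := by
      have hD0 : 0 ≤ ∑ i, D i := Finset.sum_nonneg fun i _ => hD i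
      have hZ0 : 0 ≤ ∑ i, Z i := Finset.sum_nonneg fun i _ => hZ i
      have := mul_nonneg hω.le hD0
      have := mul_nonneg hs.le hZ0
      simp only [objective]
      linarith
    refine h1.trans (Finset.sum_le_sum fun i _ => ?_)
    rcases le_total (P i) pbar with h | h
    · have hF1 : F (P i) ≤ 1 := hFp ▸ hFm h
      have hF0' : 0 ≤ F (P i) := hF0 ▸ hFm (hP i)
      nlinarith [hθ i, hP i, mul_nonneg (mul_nonneg (sub_nonneg.mpr h) (hθ i).le)
        (sub_nonneg.mpr hF1), mul_nonneg (mul_nonneg hpbar.le (hθ i).le) hF0']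
    · have hF1 : (1:ℝ) ≤ F (P i) := hFp ▸ hFm h
      nlinarith [mul_nonneg (hP i) (mul_nonneg (hθ i).le (sub_nonneg.mpr hF1)),
        mul_pos hpbar (hθ i)]
  -- the equilibrium profit is at most v
  have hprofit : (∑ i, (min (x i + z i) (demand θ F p i) * p i
      - min (x i) (demand θ F p i) * c i - s * z i)) ≤ v := by
    have hc_sum : (∑ i, min (x i) (demand θ F p i) * c i) = (1 - β) * ω * ∑ i, x i := by
      rw [Finset.mul_sum]
      refine Finset.sum_congr rfl fun i _ => ?_
      rw [min_comm]
      exact hdrv i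
    have hsplit : (∑ i, (min (x i + z i) (demand θ F p i) * p i
        - min (x i) (demand θ F p i) * c i - s * z i))
        = (∑ i, q i * p i) - (1 - β) * ω * (∑ i, x i) - s * ∑ i, z i := by
      rw [Finset.sum_sub_distrib, Finset.sum_sub_distrib, hc_sum, ← Finset.mul_sum]
    rw [hsplit, hvdef]
    simp only [objective]
    have hrev : (∑ i, q i * p i) ≤ ∑ i, p' i * (θ i * (1 - F (p' i))) := by
      refine Finset.sum_le_sum fun i _ => ?_
      rw [hp'q i]
      rcases hp'or i with h | h
      · rw [h, mul_comm]
      · rw [mul_comm (p' i) (q i)]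
        exact mul_le_mul_of_nonneg_left (hp'le i) h
    have hωδ : ω * (∑ i, δ i) = (1 - β) * ω * ∑ i, x i := by
      rw [hδsum]; ring
    linarith
  exact hprofit.trans (le_csSup hbdd hvmem)
end

section
/- Let (p, δ, x, y, z, r) be a feasible point of the original problem (4) such that d_i = θ_i(1 − F(p_i)) > 0 for all i. Define compensations c_i := (x_i/d_i)·ω·(1 − β) if d_i < x_i, and c_i := ω·(1 − β) if d_i ≥ x_i. Then (δ, x, y, z, r) is an equilibrium under (p, c), and the compensation cost incurred by the platform per period equals ω∑_i δ_i, i.e., ∑_i min(x_i, d_i)·c_i = ω∑_i δ_i. -/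
open Finset

/-- A feasible point of (4) with positive demand everywhere is supported as an equilibrium
by the constructed compensations, whose per-period cost is `ω · ∑ δ`. -/
theorem feasible_supported_as_equilibrium {n : ℕ} (α : Fin n → Fin n → ℝ) (θ : Fin n → ℝ) (F : ℝ → ℝ) (β ω s pbar : ℝ)
    (hαnn : ∀ i j, 0 ≤ α i j) (hαd : ∀ i, α i i = 0) (hαr : ∀ i, (∑ j, α i j) = 1)
    (hθ : ∀ i, 0 < θ i) (hβ0 : 0 < β) (hβ1 : β < 1) (hω : 0 < ω) (hs : 0 < s)
    (hFc : Continuous F) (hFm : Monotone F) (hF0 : F 0 = 0) (hFp : F pbar = 1)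
    (p δ x z : Fin n → ℝ) (y r : Fin n → Fin n → ℝ)
    (hfeas : FeasOrig α θ F β p δ x z y r)
    (hd : ∀ i, 0 < demand θ F p i)
    (c : Fin n → ℝ)
    (hc : ∀ i, c i = if demand θ F p i < x i
        then (x i / demand θ F p i) * (ω * (1 - β)) else ω * (1 - β)) :
    IsEquilibrium α θ F β ω p c δ x z y r ∧
    (∑ i, min (x i) (demand θ F p i) * c i) = ω * (∑ i, δ i) := by
  obtain ⟨hp, hδ, hx, hz, hy, hr, hxeq, hyeq, hzeq, hreq⟩ := hfeas
  have hzge : ∀ i, max (demand θ F p i - x i) 0 ≤ z i := by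
    intro i
    have h1 := hreq i
    have hsum : 0 ≤ ∑ j, r i j := Finset.sum_nonneg fun j _ => hr i j
    linarith
  have hkey : ∀ i, min (demand θ F p i) (x i) * c i = (1 - β) * ω * x i := by
    intro i
    rw [hc i]
    by_cases h : demand θ F p i < x i
    · rw [if_pos h, min_eq_left h.le]
      have hd0 : demand θ F p i ≠ 0 := (hd i).ne'
      field_simp
    · rw [if_neg h, min_eq_right (not_lt.1 h)]
      ring
  have hsumδ : (∑ i, δ i) = (1 - β) * (∑ i, x i) := by
    have h1 : (∑ i, x i) = β * (∑ i, x i) + ∑ i, δ i := by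
      calc ∑ i, x i
          = ∑ i, (β * ((∑ j, α j i * min (x j) (demand θ F p j)) + ∑ j, y j i) + δ i) :=
            Finset.sum_congr rfl fun i _ => hxeq i
        _ = β * ((∑ i, ∑ j, α j i * min (x j) (demand θ F p j)) + ∑ i, ∑ j, y j i)
            + ∑ i, δ i := by
            rw [Finset.sum_add_distrib, ← Finset.mul_sum, Finset.sum_add_distrib]
        _ = β * ((∑ j, min (x j) (demand θ F p j)) + ∑ j, max (x j - demand θ F p j) 0)
            + ∑ i, δ i := by
            have hA : (∑ i, ∑ j, α j i * min (x j) (demand θ F p j))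
                = ∑ j, min (x j) (demand θ F p j) := by
              rw [Finset.sum_comm]
              refine Finset.sum_congr rfl fun j _ => ?_
              rw [← Finset.sum_mul, hαr j, one_mul]
            have hB : (∑ i, ∑ j, y j i) = ∑ j, max (x j - demand θ F p j) 0 := by
              rw [Finset.sum_comm]
              exact Finset.sum_congr rfl fun j _ => hyeq j
            rw [hA, hB]
        _ = β * (∑ j, (min (x j) (demand θ F p j) + max (x j - demand θ F p j) 0))
            + ∑ i, δ i := by rw [Finset.sum_add_distrib]
        _ = β * (∑ j, x j) + ∑ i, δ i := by
            have hC : (∑ j, (min (x j) (demand θ F p j) + max (x j - demand θ F p j) 0))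
                = ∑ j, x j := Finset.sum_congr rfl fun j _ => ?_
            rw [hC]
            rcases le_total (x j) (demand θ F p j) with h | h
            · rw [min_eq_left h, max_eq_right (by linarith)]; ring
            · rw [min_eq_right h, max_eq_left (by linarith)]; ring
    linear_combination -h1
  constructor
  · refine ⟨hδ, hx, hz, hy, hr, hyeq, hxeq, ?_, ?_, hkey⟩
    · intro i
      rw [hzeq i]
      congr 1
      refine Finset.sum_congr rfl fun j _ => ?_
      rw [min_eq_right (hzge j)]
    · intro i
      rw [max_eq_left (by linarith [hzge i, hreq i]), hreq i]
  · calc ∑ i, min (x i) (demand θ F p i) * c i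
        = ∑ i, (1 - β) * ω * x i := by
          refine Finset.sum_congr rfl fun i _ => ?_
          rw [min_comm]; exact hkey i
      _ = ω * (∑ i, δ i) := by
          rw [← Finset.mul_sum, hsumδ]; ring
end

section
/- Consider a star-to-complete network with n ≥ 3 locations and parameter ξ ∈ [0,1], under Assumption 2. If the optimal value of the mixed-autonomy original problem (4) is strictly greater than the optimal value of the human-only problem (8), then k := s/ω ≤ 1 − β, i.e., s ≤ (1 − β)·ω. -/
open Finset

/-- The platform's objective `J` under Assumption 2 (uniform demand). -/
noncomputable def objU {n : ℕ} (ω s : ℝ) (p δ z : Fin n → ℝ) : ℝ :=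
  (∑ i, p i * (1 - p i)) - ω * (∑ i, δ i) - s * (∑ i, z i)

/-- Feasibility for the original problem (4) under Assumption 2, where `d i = 1 - p i`. -/
noncomputable def FeasOrigU {n : ℕ} (α : Fin n → Fin n → ℝ) (β : ℝ)
    (p δ x z : Fin n → ℝ) (y r : Fin n → Fin n → ℝ) : Prop :=
  (∀ i, 0 ≤ p i) ∧ (∀ i, p i ≤ 1) ∧ (∀ i, 0 ≤ δ i) ∧ (∀ i, 0 ≤ x i) ∧ (∀ i, 0 ≤ z i) ∧
  (∀ i j, 0 ≤ y i j) ∧ (∀ i j, 0 ≤ r i j) ∧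
  (∀ i, x i = β * ((∑ j, α j i * min (x j) (1 - p j)) + ∑ j, y j i) + δ i) ∧
  (∀ i, (∑ j, y i j) = max (x i - (1 - p i)) 0) ∧
  (∀ i, z i = (∑ j, α j i * max ((1 - p j) - x j) 0) + ∑ j, r j i) ∧
  (∀ i, (∑ j, r i j) = z i - max ((1 - p i) - x i) 0)

/-- Feasibility for the human-only problem (8) under Assumption 2. -/
noncomputable def FeasHumanU {n : ℕ} (α : Fin n → Fin n → ℝ) (β : ℝ)
    (p δ x z : Fin n → ℝ) (y r : Fin n → Fin n → ℝ) : Prop :=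
  FeasOrigU α β p δ x z y r ∧ (∀ i, z i = 0) ∧ (∀ i j, r i j = 0)

/-- The star-to-complete routing matrix `A^ξ` (location 1 is index `0`). -/
noncomputable def starToComplete (n : ℕ) (ξ : ℝ) : Fin n → Fin n → ℝ := fun i j =>
  if i = j then 0
  else if (i : ℕ) = 0 then 1 / ((n : ℝ) - 1)
  else if (j : ℕ) = 0 then ξ / ((n : ℝ) - 1) + (1 - ξ)
  else ξ / ((n : ℝ) - 1)


/-- In a star-to-complete network, AVs are beneficial only if `k = s/ω ≤ 1 - β`. -/
theorem av_beneficial_only_if_k_le (n : ℕ) (hn : 3 ≤ n) (ξ β ω s : ℝ)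
    (hξ0 : 0 ≤ ξ) (hξ1 : ξ ≤ 1)
    (hβ0 : 0 < β) (hβ1 : β < 1) (hω : 0 < ω) (hs : 0 < s)
    (α : Fin n → Fin n → ℝ) (hα : α = starToComplete n ξ)
    (hgap : sSup {v : ℝ | ∃ (p δ x z : Fin n → ℝ) (y r : Fin n → Fin n → ℝ),
        FeasHumanU α β p δ x z y r ∧ v = objU ω s p δ z}
      < sSup {v : ℝ | ∃ (p δ x z : Fin n → ℝ) (y r : Fin n → Fin n → ℝ),
        FeasOrigU α β p δ x z y r ∧ v = objU ω s p δ z}) :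
    s ≤ (1 - β) * ω := by
  by_contra hk
  push_neg at hk
  set T : Set ℝ := {v : ℝ | ∃ (p δ x z : Fin n → ℝ) (y r : Fin n → Fin n → ℝ),
        FeasHumanU α β p δ x z y r ∧ v = objU ω s p δ z} with hTdef
  set S : Set ℝ := {v : ℝ | ∃ (p δ x z : Fin n → ℝ) (y r : Fin n → Fin n → ℝ),
        FeasOrigU α β p δ x z y r ∧ v = objU ω s p δ z} with hSdef
  -- T ⊆ S
  have hTS : T ⊆ S := by
    rintro v ⟨p, δ, x, z, y, r, ⟨hfeas, _, _⟩, hv⟩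
    exact ⟨p, δ, x, z, y, r, hfeas, hv⟩
  -- 0 ∈ T
  have h0T : (0:ℝ) ∈ T := by
    refine ⟨fun _ => 1, fun _ => 0, fun _ => 0, fun _ => 0, fun _ _ => 0, fun _ _ => 0,
      ⟨⟨fun _ => zero_le_one, fun _ => le_refl 1, fun _ => le_refl 0, fun _ => le_refl 0,
        fun _ => le_refl 0, fun _ _ => le_refl 0, fun _ _ => le_refl 0,
        ?_, ?_, ?_, ?_⟩, fun _ => rfl, fun _ _ => rfl⟩, ?_⟩
    · intro i; simp
    · intro i; simp
    · intro i; simp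
    · intro i; simp
    · simp [objU]
  -- every value in S is dominated by a value in T
  have hdom : ∀ v ∈ S, ∃ w ∈ T, v ≤ w := by
    rintro v ⟨p, δ, x, z, y, r, hfeas, rfl⟩
    obtain ⟨hp0, hp1, hδ, hx, hz, hy, hr, heqx, heqy, heqz, heqr⟩ := hfeas
    have hzU : ∀ i, max ((1 - p i) - x i) 0 ≤ z i := by
      intro i
      have h1 : 0 ≤ ∑ j, r i j := Finset.sum_nonneg fun j _ => hr i j
      have h2 := heqr i
      linarith
    have hzU' : ∀ i, (1 - p i) - x i ≤ z i :=
      fun i => le_trans (le_max_left _ _) (hzU i)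
    have hmin : ∀ j, min (x j + z j) (1 - p j)
        = min (x j) (1 - p j) + max ((1 - p j) - x j) 0 := by
      intro j
      rcases le_total (x j) (1 - p j) with h | h
      · rw [min_eq_left h, max_eq_left (by linarith),
          min_eq_right (by linarith [hzU' j])]
        ring
      · rw [min_eq_right h, max_eq_right (by linarith),
          min_eq_right (by linarith [hz j])]
        ring
    have hmax0 : ∀ j, max ((1 - p j) - (x j + z j)) 0 = 0 := by
      intro j
      exact max_eq_right (by linarith [hzU' j])
    refine ⟨objU ω s p (fun i => δ i + (1 - β) * z i) (fun _ => 0),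
      ⟨p, fun i => δ i + (1 - β) * z i, fun i => x i + z i, fun _ => 0,
        fun i j => y i j + r i j, fun _ _ => 0,
        ⟨⟨hp0, hp1, ?_, ?_, ?_, ?_, ?_, ?_, ?_, ?_, ?_⟩,
          fun _ => rfl, fun _ _ => rfl⟩, rfl⟩, ?_⟩
    · intro i
      dsimp only
      have := mul_nonneg (by linarith : (0:ℝ) ≤ 1 - β) (hz i)
      linarith [hδ i]
    · intro i; dsimp only; linarith [hx i, hz i]
    · intro i; exact le_refl 0
    · intro i j; dsimp only; linarith [hy i j, hr i j]
    · intro i j; exact le_refl 0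
    · -- the x equation
      intro i
      dsimp only
      have e1 : ∑ j, α j i * min (x j + z j) (1 - p j)
          = (∑ j, α j i * min (x j) (1 - p j))
            + ∑ j, α j i * max ((1 - p j) - x j) 0 := by
        rw [← Finset.sum_add_distrib]
        exact Finset.sum_congr rfl fun j _ => by rw [hmin j, mul_add]
      have e2 : ∑ j, (y j i + r j i) = (∑ j, y j i) + ∑ j, r j i :=
        Finset.sum_add_distrib
      rw [e1, e2, heqz i, heqx i]
      ring
    · -- the y equation
      intro i
      dsimp only
      rw [Finset.sum_add_distrib, heqy i, heqr i]
      rcases le_total (x i) (1 - p i) with h | h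
      · rw [max_eq_right (by linarith), max_eq_left (by linarith),
          max_eq_left (by linarith [hzU' i])]
        ring
      · rw [max_eq_left (by linarith), max_eq_right (by linarith),
          max_eq_left (by linarith [hz i])]
        ring
    · -- the z equation
      intro i
      dsimp only
      simp [hmax0]
    · -- the r equation
      intro i
      dsimp only
      simp [hmax0 i]
    · -- objective comparison
      have hZ : (0:ℝ) ≤ ∑ i, z i := Finset.sum_nonneg fun i _ => hz i
      have hsum : ∑ i, (δ i + (1 - β) * z i)
          = (∑ i, δ i) + (1 - β) * ∑ i, z i := by
        rw [Finset.sum_add_distrib, Finset.mul_sum]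
      have h1 : (1 - β) * ω * (∑ i, z i) ≤ s * ∑ i, z i :=
        mul_le_mul_of_nonneg_right hk.le hZ
      simp only [objU, hsum, Finset.sum_const_zero, mul_zero]
      nlinarith
  -- conclude
  have hST : sSup S ≤ sSup T := by
    by_cases hb : BddAbove T
    · refine Real.sSup_le (fun v hv => ?_) ?_
      · obtain ⟨w, hw, hvw⟩ := hdom v hv
        exact le_trans hvw (le_csSup hb hw)
      · exact le_csSup hb h0T
    · have hbS : ¬ BddAbove S := fun h => hb (BddAbove.mono hTS h)
      rw [Real.sSup_of_not_bddAbove hb, Real.sSup_of_not_bddAbove hbS]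
  exact absurd hgap (not_lt.mpr hST)
end

section
/- If (p, δ, x, z, y, r) is a feasible point of the original problem (4) with d_i ≥ x_i for all i, then y_{ij} = 0 for all i, j, and (p, δ, x, z, r) is a feasible point of the alternative problem (7) with the same objective value J. -/
open Finset

/-- Feasibility for the alternative problem (7). -/
noncomputable def FeasAlt {n : ℕ} (α : Fin n → Fin n → ℝ) (θ : Fin n → ℝ) (F : ℝ → ℝ) (β : ℝ)
    (p δ x z : Fin n → ℝ) (r : Fin n → Fin n → ℝ) : Prop :=
  (∀ i, 0 ≤ p i) ∧ (∀ i, 0 ≤ δ i) ∧ (∀ i, 0 ≤ x i) ∧ (∀ i, 0 ≤ z i) ∧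
  (∀ i j, 0 ≤ r i j) ∧
  (∀ i, x i = β * (∑ j, α j i * x j) + δ i) ∧
  (∀ i, z i = (∑ j, α j i * (demand θ F p j - x j)) + ∑ j, r j i) ∧
  (∀ i, (∑ j, r i j) = z i - (demand θ F p i - x i))


/-- A feasible point of (4) with `d ≥ x` everywhere has `y = 0` and yields a feasible point
of (7) with the same objective value. -/
theorem orig_feasible_to_alt_feasible {n : ℕ} (α : Fin n → Fin n → ℝ) (θ : Fin n → ℝ) (F : ℝ → ℝ) (β ω s pbar : ℝ)
    (hαnn : ∀ i j, 0 ≤ α i j) (hαd : ∀ i, α i i = 0) (hαr : ∀ i, (∑ j, α i j) = 1)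
    (hθ : ∀ i, 0 < θ i) (hβ0 : 0 < β) (hβ1 : β < 1) (hω : 0 < ω) (hs : 0 < s)
    (hFc : Continuous F) (hFm : Monotone F) (hF0 : F 0 = 0) (hFp : F pbar = 1)
    (p δ x z : Fin n → ℝ) (y r : Fin n → Fin n → ℝ)
    (hfeas : FeasOrig α θ F β p δ x z y r)
    (hdx : ∀ i, x i ≤ demand θ F p i) :
    (∀ i j, y i j = 0) ∧
    FeasAlt α θ F β p δ x z r ∧
    objective θ F ω s p δ z = objective θ F ω s p δ z := by
  obtain ⟨hp, hδ, hx, hz, hy, hr, hx4, hy4, hz4, hr4⟩ := hfeas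
  have hy0 : ∀ i j, y i j = 0 := by
    intro i j
    have hsum : (∑ j, y i j) = 0 := by
      rw [hy4 i, max_eq_right (by linarith [hdx i])]
    have := Finset.sum_eq_zero_iff_of_nonneg (fun j _ => hy i j) |>.mp hsum
    exact this j (Finset.mem_univ j)
  refine ⟨hy0, ⟨hp, hδ, hx, hz, hr, ?_, ?_, ?_⟩, rfl⟩
  · intro i
    have := hx4 i
    simpa [hy0, min_eq_left (hdx _)] using this
  · intro i
    rw [hz4 i]
    congr 1
    exact Finset.sum_congr rfl fun j _ => by
      rw [max_eq_left (by linarith [hdx j] : (0:ℝ) ≤ demand θ F p j - x j)]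
  · intro i
    have := hr4 i
    simpa [max_eq_left (by linarith [hdx i] : (0:ℝ) ≤ demand θ F p i - x i)] using this
end

section
/- If (p, δ, x, z, r) is a feasible point of the alternative problem (7) with z_i = 0 for all i, then d_i ≤ x_i for all i, and the point (p, δ, x, y, z' , r') with y_{ij} := r_{ij}, z'_i := 0, and r'_{ij} := 0 for all i, j is a feasible point of the original problem (4) with the same objective value J. -/
open Finset

/-- A feasible point of (7) with `z = 0` has `d ≤ x` everywhere and yields a feasible point
of (4) (with `y := r`, `z' := 0`, `r' := 0`) with the same objective value. -/
theorem alt_feasible_to_orig_feasible {n : ℕ} (α : Fin n → Fin n → ℝ) (θ : Fin n → ℝ) (F : ℝ → ℝ) (β ω s pbar : ℝ)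
    (hαnn : ∀ i j, 0 ≤ α i j) (hαd : ∀ i, α i i = 0) (hαr : ∀ i, (∑ j, α i j) = 1)
    (hθ : ∀ i, 0 < θ i) (hβ0 : 0 < β) (hβ1 : β < 1) (hω : 0 < ω) (hs : 0 < s)
    (hFc : Continuous F) (hFm : Monotone F) (hF0 : F 0 = 0) (hFp : F pbar = 1)
    (p δ x z : Fin n → ℝ) (r : Fin n → Fin n → ℝ)
    (hfeas : FeasAlt α θ F β p δ x z r)
    (hz : ∀ i, z i = 0) :
    (∀ i, demand θ F p i ≤ x i) ∧
    FeasOrig α θ F β p δ x (fun _ => 0) r (fun _ _ => 0) ∧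
    objective θ F ω s p δ (fun _ => 0) = objective θ F ω s p δ z := by
  obtain ⟨hp, hδ, hx, hznn, hr, hxe, hze, hre⟩ := hfeas
  have hdx : ∀ i, demand θ F p i ≤ x i := by
    intro i
    have h1 := hre i
    have h2 : 0 ≤ ∑ j, r i j := Finset.sum_nonneg fun j _ => hr i j
    rw [h1, hz i] at h2
    linarith
  refine ⟨hdx, ?_, ?_⟩
  · refine ⟨hp, hδ, hx, fun _ => le_refl 0, hr, fun _ _ => le_refl 0, ?_, ?_, ?_, ?_⟩
    · intro i
      have key : ∑ j, α j i * min (x j) (demand θ F p j) + ∑ j, r j i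
          = ∑ j, α j i * x j := by
        have hz' := hze i
        rw [hz i] at hz'
        have : ∀ j, α j i * min (x j) (demand θ F p j) = α j i * demand θ F p j := by
          intro j; rw [min_eq_right (hdx j)]
        rw [Finset.sum_congr rfl fun j _ => this j]
        have : ∑ j, α j i * demand θ F p j - ∑ j, α j i * x j + ∑ j, r j i = 0 := by
          rw [← Finset.sum_sub_distrib]
          simpa [mul_sub] using hz'.symm
        linarith
      rw [key]; exact hxe i
    · intro i
      rw [max_eq_left (by linarith [hdx i])]
      have := hre i; rw [hz i] at this; linarith
    · intro i
      have : ∀ j, max (demand θ F p j - x j) 0 = 0 := fun j =>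
        max_eq_right (by linarith [hdx j])
      simp [this]
    · intro i
      have : max (demand θ F p i - x i) 0 = 0 := max_eq_right (by linarith [hdx i])
      simp [this]
  · unfold objective
    have : (∑ i, z i) = 0 := by simp [hz]
    simp [this]
end

section
/- In the alternative problem (7) with s > 0, no optimal solution has, for any location i, both z_i > 0 and r_{ii} > 0. Equivalently: if a feasible point (p, δ, x, z, r) of (7) satisfies z_i > 0 and r_{ii} > 0 for some i, then there exists another feasible point of (7) with strictly larger objective value J. -/
open Finset

/-- In problem (7), a feasible point with `z i > 0` and `r i i > 0` at some location is never
optimal: there is a feasible point with strictly larger objective. -/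
theorem not_optimal_of_idle_av {n : ℕ} (α : Fin n → Fin n → ℝ) (θ : Fin n → ℝ) (F : ℝ → ℝ) (β ω s pbar : ℝ)
    (hαnn : ∀ i j, 0 ≤ α i j) (hαd : ∀ i, α i i = 0) (hαr : ∀ i, (∑ j, α i j) = 1)
    (hθ : ∀ i, 0 < θ i) (hβ0 : 0 < β) (hβ1 : β < 1) (hω : 0 < ω) (hs : 0 < s)
    (hFc : Continuous F) (hFm : Monotone F) (hF0 : F 0 = 0) (hFp : F pbar = 1)
    (p δ x z : Fin n → ℝ) (r : Fin n → Fin n → ℝ)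
    (hfeas : FeasAlt α θ F β p δ x z r)
    (i : Fin n) (hzi : 0 < z i) (hri : 0 < r i i) :
    ∃ (p' δ' x' z' : Fin n → ℝ) (r' : Fin n → Fin n → ℝ),
      FeasAlt α θ F β p' δ' x' z' r' ∧
      objective θ F ω s p δ z < objective θ F ω s p' δ' z' := by

  obtain ⟨hp, hδ, hx, hz, hr, hxe, hze, hre⟩ := hfeas
  set ε := min (z i) (r i i) with hεdef
  have hε : 0 < ε := lt_min hzi hri
  have hεz : ε ≤ z i := min_le_left _ _
  have hεr : ε ≤ r i i := min_le_right _ _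
  refine ⟨p, δ, x, (fun k => z k - (if k = i then ε else 0)),
    (fun j k => r j k - (if j = i ∧ k = i then ε else 0)), ?_, ?_⟩
  · have hsumr : ∀ k, (∑ j, (r j k - (if j = i ∧ k = i then ε else 0)))
        = (∑ j, r j k) - (if k = i then ε else 0) := by
      intro k
      rw [Finset.sum_sub_distrib]
      congr 1
      by_cases hk : k = i
      · simp [hk]
      · simp [hk]
    have hsumr' : (∑ j, (r i j - (if i = i ∧ j = i then ε else 0)))
        = (∑ j, r i j) - ε := by
      rw [Finset.sum_sub_distrib]
      simp
    refine ⟨hp, hδ, hx, ?_, ?_, hxe, ?_, ?_⟩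
    · intro k
      by_cases hk : k = i
      · subst hk; simpa using sub_nonneg.2 hεz
      · simpa [hk] using hz k
    · intro j k
      by_cases h : j = i ∧ k = i
      · obtain ⟨h1, h2⟩ := h; subst h1; subst h2
        simpa using sub_nonneg.2 hεr
      · simpa [h] using hr j k
    · intro k
      dsimp only
      rw [hsumr k, hze k]
      ring
    · intro k
      by_cases hk : k = i
      · subst hk
        dsimp only
        rw [hsumr', hre k]
        have : (if (k:Fin n) = k then ε else 0) = ε := if_pos rfl
        rw [this]
        ring
      · have : ∀ j, (r k j - (if k = i ∧ j = i then ε else 0)) = r k j := by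
          intro j; simp [hk]
        dsimp only
        simp only [this]
        rw [hre k]
        simp [hk]
  · unfold objective
    have : (∑ k, (z k - (if k = i then ε else 0))) = (∑ k, z k) - ε := by
      rw [Finset.sum_sub_distrib]; simp
    rw [this]
    have : s * ((∑ k, z k) - ε) = s * (∑ k, z k) - s * ε := by ring
    rw [this]
    have : 0 < s * ε := mul_pos hs hε
    linarith
end

section
/- (Propagation of autonomous vehicles over a fully connected network.) Suppose the routing matrix satisfies α_{ij} > 0 for all i ≠ j (as holds for star-to-complete networks with ξ > 0). If (p, δ, x, z, y, r) is a feasible point of the original problem (4) and there exists a location k with d_k > x_k, then z_i > 0 for every location i. -/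
open Finset

/-- Propagation of AVs over a fully connected network: if demand strictly exceeds driver supply
somewhere, then AVs are present at every location. -/
theorem av_propagation {n : ℕ} (hn : 2 ≤ n) (α : Fin n → Fin n → ℝ) (θ : Fin n → ℝ) (F : ℝ → ℝ) (β ω s pbar : ℝ)
    (hαnn : ∀ i j, 0 ≤ α i j) (hαd : ∀ i, α i i = 0) (hαr : ∀ i, (∑ j, α i j) = 1)
    (hθ : ∀ i, 0 < θ i) (hβ0 : 0 < β) (hβ1 : β < 1) (hω : 0 < ω) (hs : 0 < s)
    (hFc : Continuous F) (hFm : Monotone F) (hF0 : F 0 = 0) (hFp : F pbar = 1)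
    (hαpos : ∀ i j : Fin n, i ≠ j → 0 < α i j)
    (p δ x z : Fin n → ℝ) (y r : Fin n → Fin n → ℝ)
    (hfeas : FeasOrig α θ F β p δ x z y r)
    (k : Fin n) (hk : x k < demand θ F p k) :
    ∀ i, 0 < z i := by
  obtain ⟨hp, hδ, hx, hz, hy, hr, hxeq, hyeq, hzeq, hreq⟩ := hfeas
  have hmax : (0 : ℝ) < max (demand θ F p k - x k) 0 := by
    have : 0 < demand θ F p k - x k := by linarith
    simp [max_eq_left this.le, this]
  intro i
  by_cases hik : i = k
  · subst hik
    have hsum : 0 ≤ ∑ j, r i j := Finset.sum_nonneg fun j _ => hr i j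
    rw [hreq i] at hsum
    linarith
  · have h1 : α k i * max (demand θ F p k - x k) 0 ≤
        ∑ j, α j i * max (demand θ F p j - x j) 0 := by
      apply Finset.single_le_sum (f := fun j => α j i * max (demand θ F p j - x j) 0)
        (fun j _ => mul_nonneg (hαnn j i) (le_max_right _ _)) (Finset.mem_univ k)
    have h2 : 0 < α k i * max (demand θ F p k - x k) 0 :=
      mul_pos (hαpos k i (Ne.symm hik)) hmax
    have h3 : 0 ≤ ∑ j, r j i := Finset.sum_nonneg fun j _ => hr j i
    rw [hzeq i]
    linarith
end

section
/- (Algebraic core of the AV-cost bound.) Let n ≥ 3, ξ ∈ [0,1], c_1 := ξ/(n−1) + (1−ξ), c_2 := ξ/(n−1), β ∈ (0,1), and ω, s ∈ ℝ. Suppose μ_1, …, μ_n, λ_1, …, λ_n, γ_1, …, γ_n ∈ ℝ satisfy: (i) μ_i ≤ ω for all i; (ii) λ_i + γ_i = −s for all i; (iii) (β/(n−1))·∑_{j=2}^n μ_j − (1/(n−1))·∑_{j=2}^n λ_j − γ_1 − μ_1 ≤ 0; and (iv) for every i ∈ {2, …, n}: c_1·(β·μ_1 − λ_1) + c_2·∑_{j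 ∉ {1, i}} (β·μ_j − λ_j) − γ_i − μ_i ≤ 0. Then s ≤ (1 − β)·ω. -/
open Finset


/-- Algebraic core of the AV-cost bound from the KKT multipliers of a star-to-complete
network (location 1 is index `0`). -/
theorem kkt_av_cost_bound {n : ℕ} [NeZero n] (hn : 3 ≤ n)
    (ξ β ω s : ℝ) (hξ0 : 0 ≤ ξ) (hξ1 : ξ ≤ 1) (hβ0 : 0 < β) (hβ1 : β < 1)
    (c₁ c₂ : ℝ) (hc₁ : c₁ = ξ / ((n : ℝ) - 1) + (1 - ξ)) (hc₂ : c₂ = ξ / ((n : ℝ) - 1))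
    (μ lam γ : Fin n → ℝ)
    (h1 : ∀ i, μ i ≤ ω)
    (h2 : ∀ i, lam i + γ i = -s)
    (h3 : (β / ((n : ℝ) - 1)) * (∑ j ∈ Finset.univ.erase 0, μ j)
        - (1 / ((n : ℝ) - 1)) * (∑ j ∈ Finset.univ.erase 0, lam j) - γ 0 - μ 0 ≤ 0)
    (h4 : ∀ i : Fin n, i ≠ 0 →
        c₁ * (β * μ 0 - lam 0)
        + c₂ * (∑ j ∈ (Finset.univ.erase 0).erase i, (β * μ j - lam j))
        - γ i - μ i ≤ 0) :
    s ≤ (1 - β) * ω := by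
  set E : Finset (Fin n) := Finset.univ.erase 0 with hE
  have hn3 : (3:ℝ) ≤ (n:ℝ) := by exact_mod_cast hn
  have hNpos : (0:ℝ) < (n:ℝ) - 1 := by linarith
  have hNne : ((n:ℝ) - 1) ≠ 0 := ne_of_gt hNpos
  set N : ℝ := (n:ℝ) - 1 with hN
  have hcardE : (E.card : ℝ) = N := by
    have h : E.card = n - 1 := by
      simp [hE, Finset.card_erase_of_mem, Finset.card_univ]
    rw [h, hN]
    have h1n : 1 ≤ n := by omega
    push_cast [h1n]
    ring
  set A : ℝ := ∑ j ∈ E, μ j with hA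
  set B : ℝ := ∑ j ∈ E, lam j with hB
  set G : ℝ := ∑ j ∈ E, γ j with hG
  have hc1nn : 0 ≤ c₁ := by
    have := div_nonneg hξ0 hNpos.le
    rw [hc₁]; linarith
  have hcrel : c₂ * (N - 1) = 1 - c₁ := by
    rw [hc₂, hc₁, hN]; field_simp [show (n:ℝ) - 1 ≠ 0 from hNne]; ring
  -- sum of h4 over E
  have key : ∀ i ∈ E, c₁ * (β * μ 0 - lam 0) + c₂ * ((β * A - B) - (β * μ i - lam i))
      - γ i - μ i ≤ 0 := by
    intro i hi
    have hi0 : i ≠ 0 := (Finset.mem_erase.mp hi).1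
    have h := h4 i hi0
    have hsub : ∑ j ∈ E.erase i, (β * μ j - lam j) = (β * A - B) - (β * μ i - lam i) := by
      rw [Finset.sum_erase_eq_sub hi, hA, hB, Finset.sum_sub_distrib, Finset.mul_sum]
    rw [hsub] at h
    exact h
  have hsum : ∑ i ∈ E, (c₁ * (β * μ 0 - lam 0) + c₂ * ((β * A - B) - (β * μ i - lam i))
      - γ i - μ i) ≤ 0 := by
    calc _ ≤ ∑ i ∈ E, (0:ℝ) := Finset.sum_le_sum key
    _ = 0 := by simp
  have hexpand : ∑ i ∈ E, (c₁ * (β * μ 0 - lam 0) + c₂ * ((β * A - B) - (β * μ i - lam i))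
      - γ i - μ i)
      = N * (c₁ * (β * μ 0 - lam 0)) + c₂ * (N * (β * A - B) - (β * A - B)) - G - A := by
    rw [← hcardE]
    simp only [Finset.sum_sub_distrib, Finset.sum_add_distrib, Finset.sum_const,
      nsmul_eq_mul, ← Finset.mul_sum, Finset.sum_sub_distrib, ← hA, ← hB, ← hG]
    ring
  rw [hexpand] at hsum
  have hsum' : c₁ * N * (β * μ 0 - lam 0) + (1 - c₁) * (β * A - B) - G - A ≤ 0 := by
    have h' : c₂ * (N * (β * A - B) - (β * A - B)) = (1 - c₁) * (β * A - B) := by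
      rw [← hcrel]; ring
    rw [h'] at hsum; linarith
  -- h3 scaled by N
  have h3' : β * A - B - N * (γ 0) - N * (μ 0) ≤ 0 := by
    have h := mul_le_mul_of_nonneg_left h3 hNpos.le
    rw [mul_zero] at h
    have heq : N * (β / N * A - 1 / N * B - γ 0 - μ 0)
        = β * A - B - N * γ 0 - N * μ 0 := by
      field_simp
    linarith [heq ▸ h]
  -- G = -N*s - B
  have hGeq : G = -(N * s) - B := by
    have : G + B = ∑ j ∈ E, (γ j + lam j) := by
      rw [hG, hB, ← Finset.sum_add_distrib]
    have h2' : ∑ j ∈ E, (γ j + lam j) = N * (-s) := by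
      have : ∀ j ∈ E, γ j + lam j = -s := fun j _ => by linarith [h2 j]
      rw [Finset.sum_congr rfl this, Finset.sum_const, nsmul_eq_mul, hcardE]
    linarith [this.trans h2']
  have hAle : A ≤ N * ω := by
    calc A ≤ ∑ j ∈ E, ω := Finset.sum_le_sum fun j _ => h1 j
    _ = N * ω := by rw [Finset.sum_const, nsmul_eq_mul, hcardE]
  have hγ0 : γ 0 = -s - lam 0 := by linarith [h2 0]
  have h3'' : β * A - B + N * s + N * lam 0 - N * μ 0 ≤ 0 := by
    rw [hγ0] at h3'; linarith
  have hsum'' : c₁ * N * (β * μ 0 - lam 0) + (1 - c₁) * (β * A - B) + N * s + B - A ≤ 0 := by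
    rw [hGeq] at hsum'; linarith
  have hfin : (1 + c₁) * N * s ≤ (1 + c₁) * N * ((1 - β) * ω) := by
    nlinarith [mul_le_mul_of_nonneg_left h3'' hc1nn,
      mul_le_mul_of_nonneg_left hAle (by linarith : (0:ℝ) ≤ 1 - β),
      mul_le_mul_of_nonneg_left (h1 0) (by nlinarith [mul_nonneg hc1nn hNpos.le] : (0:ℝ) ≤ c₁ * N * (1 - β)),
      hsum'']
  have hpos : (0:ℝ) < (1 + c₁) * N := by positivity
  exact le_of_mul_le_mul_left hfin hpos
end
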